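/- Fix k ∈ [n]. Then ∑_{S ⊆ [n]∖{k}, |S|=2} v_S = Φ_n(w), where w ∈ ℝ^n has entries w_i = n−3 for i ≠ k and w_k = 1. In particular, the sum of all vectors of V_k is zero in the quotient Q_n = ℝ^T / im(Φ_n). -/

import Mathlib

/-!
The pairs `S ⊆ A` meeting a pair `U` in exactly one point are the `{x, y}` with
`x ∈ A ∩ U` and `y ∈ A \ U`, so the `U`-coordinate of `∑_{S ⊆ A} v_S` is
`#(A ∩ U) * #(A \ U)`. For `A = [n] ∖ {k}` this is `n - 2 = 1 + (n - 3)` if `k ∈ U`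
and `2 (n - 3)` otherwise, i.e. `∑_{i ∈ U} w_i`.
-/

open Finset

noncomputable def Phi (n : ℕ) :
    (Fin n → ℝ) →ₗ[ℝ] ({S : Finset (Fin n) // S.card = 2} → ℝ) :=
  LinearMap.pi fun S => ∑ i ∈ S.1, LinearMap.proj i

def v (n : ℕ) (I : Finset (Fin n)) : {S : Finset (Fin n) // S.card = 2} → ℝ :=
  fun S => if (I ∩ S.1).card = 1 then 1 else 0

section
variable {α : Type*} [DecidableEq α]

lemma card_pair_inter_eq_one_iff {x y : α} (hxy : x ≠ y) (U : Finset α) :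
    #({x, y} ∩ U) = 1 ↔ (x ∈ U ↔ y ∉ U) := by
  by_cases hx : x ∈ U <;> by_cases hy : y ∈ U <;>
    simp [insert_inter_of_mem, insert_inter_of_notMem, singleton_inter_of_mem,
      singleton_inter_of_notMem, hx, hy, hxy]

lemma card_filter_powersetCard_two_card_inter_eq_one (A U : Finset α) :
    #{S ∈ A.powersetCard 2 | #(S ∩ U) = 1} = #(A ∩ U) * #(A \ U) := by
  rw [← card_product]
  symm
  refine card_bij (fun p _ => {p.1, p.2}) ?_ ?_ ?_
  · rintro ⟨x, y⟩ hp
    simp only [mem_product, mem_inter, mem_sdiff] at hp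
    have hxy : x ≠ y := by rintro rfl; exact hp.2.2 hp.1.2
    simp only [mem_filter, mem_powersetCard, card_pair_inter_eq_one_iff hxy]
    refine ⟨⟨?_, card_pair hxy⟩, ?_⟩
    · simp [insert_subset_iff, hp.1.1, hp.2.1]
    · tauto
  · rintro ⟨x₁, y₁⟩ h₁ ⟨x₂, y₂⟩ h₂ h
    simp only [mem_product, mem_inter, mem_sdiff] at h₁ h₂
    have hx : x₁ ∈ ({x₂, y₂} : Finset α) := h ▸ mem_insert_self _ _
    have hy : y₁ ∈ ({x₂, y₂} : Finset α) := h ▸ mem_insert_of_mem (mem_singleton_self _)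
    simp only [mem_insert, mem_singleton] at hx hy
    grind
  · intro S hS
    simp only [mem_filter, mem_powersetCard] at hS
    obtain ⟨⟨hSA, hS2⟩, hSU⟩ := hS
    obtain ⟨x, y, hxy, rfl⟩ := card_eq_two.mp hS2
    rw [card_pair_inter_eq_one_iff hxy] at hSU
    rw [insert_subset_iff, singleton_subset_iff] at hSA
    by_cases hx : x ∈ U
    · exact ⟨(x, y), by simp [hSA, hx, hSU.mp hx], rfl⟩
    · exact ⟨(y, x), by simp [hSA, hx, not_imp_comm.mp hSU.mpr hx], pair_comm _ _⟩

end

lemma Phi_apply (n : ℕ) (a : Fin n → ℝ) (U : {S : Finset (Fin n) // #S = 2}) :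
    Phi n a U = ∑ i ∈ U.1, a i := by
  simp [Phi]

lemma sum_v_powersetCard_apply (n : ℕ) (A : Finset (Fin n))
    (U : {S : Finset (Fin n) // #S = 2}) :
    (∑ S ∈ A.powersetCard 2, v n S) U = #(A ∩ U.1) * #(A \ U.1) := by
  simp only [Finset.sum_apply, v, sum_boole, card_filter_powersetCard_two_card_inter_eq_one,
    Nat.cast_mul]

lemma card_erase_inter_mul_card_erase_sdiff {n : ℕ} (k : Fin n) {U : Finset (Fin n)}
    (hU : #U = 2) :
    (#(univ.erase k ∩ U) * #(univ.erase k \ U) : ℝ) =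
      ∑ i ∈ U, if i = k then 1 else (n : ℝ) - 3 := by
  have h_inter : univ.erase k ∩ U = U.erase k := by ext; simp
  have h_sdiff : univ.erase k \ U = univ \ insert k U := by ext; simp [not_or, and_comm]
  have h_le : #(insert k U) ≤ n := (card_le_univ _).trans_eq (Fintype.card_fin n)
  rw [h_inter, h_sdiff, card_univ_sdiff, Fintype.card_fin, Nat.cast_sub h_le]
  by_cases hk : k ∈ U
  · rw [card_erase_of_mem hk, insert_eq_of_mem hk, hU, ← add_sum_erase U _ hk, if_pos rfl,
      sum_congr rfl fun i hi => if_neg (ne_of_mem_erase hi), sum_const, card_erase_of_mem hk, hU]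
    push_cast; ring
  · rw [erase_eq_of_notMem hk, card_insert_of_notMem hk, hU,
      sum_congr rfl fun i hi => if_neg (ne_of_mem_of_not_mem hi hk), sum_const, hU]
    push_cast; ring

theorem sum_Vk_in_image_general (n : ℕ) (k : Fin n) :
    (∑ S ∈ Finset.powersetCard 2 ((Finset.univ : Finset (Fin n)).erase k), v n S)
        = Phi n (fun i => if i = k then 1 else (n : ℝ) - 3) ∧
      (∑ S ∈ Finset.powersetCard 2 ((Finset.univ : Finset (Fin n)).erase k),
          Submodule.Quotient.mk (p := LinearMap.range (Phi n)) (v n S)) = 0 := by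
  have h_sum : (∑ S ∈ powersetCard 2 (univ.erase k), v n S)
      = Phi n (fun i => if i = k then 1 else (n : ℝ) - 3) := by
    funext U
    rw [sum_v_powersetCard_apply, Phi_apply, card_erase_inter_mul_card_erase_sdiff k U.2]
  refine ⟨h_sum, ?_⟩
  simp_rw [← Submodule.mkQ_apply, ← map_sum, h_sum, Submodule.mkQ_apply,
    Submodule.Quotient.mk_eq_zero]
  exact LinearMap.mem_range_self _ _

theorem sum_Vk_in_image (n : ℕ) (hn : 4 ≤ n) (k : Fin n) :
    (∑ S ∈ Finset.powersetCard 2 ((Finset.univ : Finset (Fin n)).erase k), v n S)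
        = Phi n (fun i => if i = k then 1 else (n : ℝ) - 3) ∧
      (∑ S ∈ Finset.powersetCard 2 ((Finset.univ : Finset (Fin n)).erase k),
          Submodule.Quotient.mk (p := LinearMap.range (Phi n)) (v n S)) = 0 :=
  sum_Vk_in_image_general n k
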